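/- For any lists p and y* over a type α with decidable equality and any token a : α, the minimum of D(p ++ (a :: s), y*) over all lists s is at most m(p, y*) + 1, where m(p, y*) = min over 0 ≤ j ≤ |y*| of D(p, y*_{<j}); i.e., extending the prefix p by any single token increases the best achievable edit distance to y* by at most 1. -/

import Mathlib

namespace Levenshtein

/-- Costs of the edit operations (as in the former `Mathlib.Data.List.EditDistance.Defs`). -/
structure Cost (α β δ : Type*) where
  delete : α → δ
  insert : β → δ
  substitute : α → β → δ

/-- Unit costs; substitution of equal letters is free. -/
def defaultCost {α : Type*} [DecidableEq α] : Cost α α ℕ where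
  delete _ := 1
  insert _ := 1
  substitute a b := if a = b then 0 else 1

/-- One step of the dynamic program. -/
def impl {α β δ : Type*} [AddZeroClass δ] [Min δ] (C : Cost α β δ) (xs : List α) (y : β)
    (d : {r : List δ // 0 < r.length}) : {r : List δ // 0 < r.length} :=
  let ⟨ds, w⟩ := d
  xs.zip (ds.zip ds.tail) |>.foldr
    (init := ⟨[ds.getLast (List.length_pos_iff.mp w) + C.insert y], by simp⟩)
    (fun ⟨x, d₀, d₁⟩ ⟨r, w⟩ =>
      ⟨min (C.delete x + r[0]) (min (C.insert y + d₀) (C.substitute x y + d₁)) :: r, by simp⟩)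

end Levenshtein

open Levenshtein in
/-- Edit distances from all suffixes of `xs` to `ys`. -/
def suffixLevenshtein {α β δ : Type*} [AddZeroClass δ] [Min δ] (C : Cost α β δ)
    (xs : List α) (ys : List β) : {r : List δ // 0 < r.length} :=
  ys.foldr
    (impl C xs)
    (xs.foldr (init := ⟨[0], by simp⟩) (fun a ⟨r, w⟩ => ⟨(C.delete a + r[0]) :: r, by simp⟩))

open Levenshtein in
/-- The (weighted) Levenshtein distance, as formerly defined in Mathlib. -/
def levenshtein {α β δ : Type*} [AddZeroClass δ] [Min δ] (C : Cost α β δ)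
    (xs : List α) (ys : List β) : δ :=
  let ⟨r, w⟩ := suffixLevenshtein C xs ys
  r[0]

/-- Unit-cost Levenshtein edit distance between two lists. -/
def editDist {α : Type*} [DecidableEq α] (u v : List α) : ℕ :=
  levenshtein Levenshtein.defaultCost u v

/-- `rowMin p y = min over 0 ≤ j ≤ |y|` of the edit distance between `p` and `y.take j`. -/
def rowMin {α : Type*} [DecidableEq α] (p y : List α) : ℕ :=
  (Finset.range (y.length + 1)).inf' (by simp) (fun j => editDist p (y.take j))

/-!
Let `j` attain the minimum `rowMin p ystar` and take `s = ystar.drop j`, so that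
`ystar = ystar.take j ++ s`. Edit distance is subadditive under concatenation (align the two
pieces separately), hence
`D(p ++ a :: s, ystar) ≤ D(p, ystar.take j) + D(a :: s, s) ≤ rowMin p ystar + 1`,
the last step deleting `a`.
-/

open Levenshtein

section Recursion

variable {α β δ : Type*} [AddZeroClass δ] [Min δ] (C : Cost α β δ)

theorem Levenshtein.impl_cons (x : α) (xs : List α) (y : β) (d : δ) (ds : List δ) (w)
    (w' : 0 < ds.length) :
    impl C (x :: xs) y ⟨d :: ds, w⟩ =
      let ⟨r, _⟩ := impl C xs y ⟨ds, w'⟩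
      ⟨min (C.delete x + r[0]) (min (C.insert y + d) (C.substitute x y + ds[0])) :: r, by simp⟩ :=
  match ds, w' with | _ :: _, _ => rfl

theorem Levenshtein.impl_length (xs : List α) (y : β) (d : {r : List δ // 0 < r.length})
    (w : d.1.length = xs.length + 1) :
    (impl C xs y d).1.length = xs.length + 1 := by
  induction xs generalizing d with
  | nil => rfl
  | cons x xs ih =>
    match d, w with
    | ⟨d₁ :: d₂ :: ds, _⟩, w =>
      rw [impl_cons C x xs y d₁ (d₂ :: ds) _ (by simp)]
      simpa using ih ⟨d₂ :: ds, by simp⟩ (by simpa using w)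

theorem suffixLevenshtein_cons_right (xs : List α) (y : β) (ys : List β) :
    suffixLevenshtein C xs (y :: ys) = impl C xs y (suffixLevenshtein C xs ys) :=
  rfl

theorem suffixLevenshtein_length (xs : List α) (ys : List β) :
    (suffixLevenshtein C xs ys).1.length = xs.length + 1 := by
  induction ys with
  | nil => induction xs <;> simp_all [suffixLevenshtein]
  | cons y ys ih => exact impl_length C xs y _ ih

theorem levenshtein_eq_head (xs : List α) (ys : List β) :
    levenshtein C xs ys = (suffixLevenshtein C xs ys).1[0]'(suffixLevenshtein C xs ys).2 :=
  rfl

theorem levenshtein_nil_nil : levenshtein C [] [] = 0 :=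
  rfl

theorem levenshtein_cons_nil (x : α) (xs : List α) :
    levenshtein C (x :: xs) [] = C.delete x + levenshtein C xs [] :=
  rfl

theorem suffixLevenshtein_cons_left (x : α) (xs : List α) (ys : List β) :
    suffixLevenshtein C (x :: xs) ys =
      ⟨levenshtein C (x :: xs) ys :: (suffixLevenshtein C xs ys).1, by simp⟩ := by
  induction ys with
  | nil => rfl
  | cons y ys ih =>
    have tail_eq : (suffixLevenshtein C (x :: xs) (y :: ys)).1.tail =
        (suffixLevenshtein C xs (y :: ys)).1 := by
      rw [suffixLevenshtein_cons_right, ih,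
        impl_cons C x xs y _ _ _ (by simp [suffixLevenshtein_length])]
      rfl
    apply Subtype.ext
    rw [← tail_eq, levenshtein_eq_head]
    match suffixLevenshtein C (x :: xs) (y :: ys) with
    | ⟨_ :: _, _⟩ => rfl

theorem levenshtein_cons_cons (x : α) (xs : List α) (y : β) (ys : List β) :
    levenshtein C (x :: xs) (y :: ys) =
      min (C.delete x + levenshtein C xs (y :: ys))
        (min (C.insert y + levenshtein C (x :: xs) ys)
          (C.substitute x y + levenshtein C xs ys)) := by
  rw [levenshtein_eq_head, suffixLevenshtein_cons_right, suffixLevenshtein_cons_left,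
    impl_cons C x xs y _ _ _ (suffixLevenshtein C xs ys).2]
  rfl

end Recursion

theorem levenshtein_nil_cons {α β δ : Type*} [AddCommMonoid δ] [Min δ] (C : Cost α β δ)
    (y : β) (ys : List β) :
    levenshtein C [] (y :: ys) = C.insert y + levenshtein C [] ys := by
  rw [levenshtein_eq_head, levenshtein_eq_head, suffixLevenshtein_cons_right]
  have length_eq := suffixLevenshtein_length C [] ys
  match suffixLevenshtein C [] ys, length_eq with
  | ⟨[d], _⟩, _ => simp [impl, add_comm]

section Bounds

variable {α β δ : Type*}

theorem levenshtein_cons_left_le [AddZeroClass δ] [LinearOrder δ] (C : Cost α β δ) (x : α)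
    (u : List α) (v : List β) :
    levenshtein C (x :: u) v ≤ C.delete x + levenshtein C u v := by
  cases v with
  | nil => exact (levenshtein_cons_nil C x u).le
  | cons y v => exact (levenshtein_cons_cons C x u y v).trans_le (min_le_left _ _)

theorem levenshtein_cons_right_le [AddCommMonoid δ] [LinearOrder δ] (C : Cost α β δ) (y : β)
    (u : List α) (v : List β) :
    levenshtein C u (y :: v) ≤ C.insert y + levenshtein C u v := by
  cases u with
  | nil => exact (levenshtein_nil_cons C y v).le
  | cons x u =>
    exact (levenshtein_cons_cons C x u y v).trans_le
      (min_le_of_right_le (min_le_left _ _))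

theorem levenshtein_cons_cons_le_substitute [AddZeroClass δ] [LinearOrder δ] (C : Cost α β δ)
    (x : α) (u : List α) (y : β) (v : List β) :
    levenshtein C (x :: u) (y :: v) ≤ C.substitute x y + levenshtein C u v :=
  (levenshtein_cons_cons C x u y v).trans_le (min_le_of_right_le (min_le_right _ _))

theorem levenshtein_append_le [AddCommMonoid δ] [LinearOrder δ] [IsOrderedAddMonoid δ]
    (C : Cost α β δ) (u₁ u₂ : List α) (v₁ v₂ : List β) :
    levenshtein C (u₁ ++ u₂) (v₁ ++ v₂) ≤ levenshtein C u₁ v₁ + levenshtein C u₂ v₂ := by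
  induction u₁ generalizing v₁ with
  | nil =>
    induction v₁ with
    | nil => simp [levenshtein_nil_nil]
    | cons y ys ih =>
      calc levenshtein C u₂ (y :: (ys ++ v₂))
          ≤ C.insert y + levenshtein C u₂ (ys ++ v₂) := levenshtein_cons_right_le C y _ _
        _ ≤ C.insert y + (levenshtein C [] ys + levenshtein C u₂ v₂) := by gcongr; exact ih
        _ = levenshtein C [] (y :: ys) + levenshtein C u₂ v₂ := by
          rw [levenshtein_nil_cons, add_assoc]
  | cons x xs ihx =>
    induction v₁ with
    | nil =>
      calc levenshtein C (x :: (xs ++ u₂)) v₂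
          ≤ C.delete x + levenshtein C (xs ++ u₂) ([] ++ v₂) := levenshtein_cons_left_le C x _ _
        _ ≤ C.delete x + (levenshtein C xs [] + levenshtein C u₂ v₂) := by gcongr; exact ihx []
        _ = levenshtein C (x :: xs) [] + levenshtein C u₂ v₂ := by
          rw [levenshtein_cons_nil, add_assoc]
    | cons y ys ihy =>
      rw [levenshtein_cons_cons C x xs y ys, ← min_add_add_right, ← min_add_add_right]
      refine le_min ?_ (le_min ?_ ?_)
      · calc levenshtein C (x :: (xs ++ u₂)) ((y :: ys) ++ v₂)
            ≤ C.delete x + levenshtein C (xs ++ u₂) ((y :: ys) ++ v₂) :=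
              levenshtein_cons_left_le C x _ _
          _ ≤ _ := by rw [add_assoc]; gcongr; exact ihx (y :: ys)
      · calc levenshtein C ((x :: xs) ++ u₂) (y :: (ys ++ v₂))
            ≤ C.insert y + levenshtein C ((x :: xs) ++ u₂) (ys ++ v₂) :=
              levenshtein_cons_right_le C y _ _
          _ ≤ _ := by rw [add_assoc]; gcongr
      · calc levenshtein C (x :: (xs ++ u₂)) (y :: (ys ++ v₂))
            ≤ C.substitute x y + levenshtein C (xs ++ u₂) (ys ++ v₂) :=
              levenshtein_cons_cons_le_substitute C x _ y _
          _ ≤ _ := by rw [add_assoc]; gcongr; exact ihx ys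

end Bounds

section EditDist

variable {α : Type*} [DecidableEq α]

theorem editDist_self (u : List α) : editDist u u = 0 := by
  induction u with
  | nil => rfl
  | cons x u ih =>
    have h : editDist (x :: u) (x :: u) ≤ defaultCost.substitute x x + editDist u u :=
      levenshtein_cons_cons_le_substitute defaultCost x u x u
    simpa [defaultCost, ih] using h

theorem editDist_append_le (u₁ u₂ v₁ v₂ : List α) :
    editDist (u₁ ++ u₂) (v₁ ++ v₂) ≤ editDist u₁ v₁ + editDist u₂ v₂ :=
  levenshtein_append_le _ u₁ u₂ v₁ v₂

theorem editDist_cons_self_le_one (a : α) (u : List α) : editDist (a :: u) u ≤ 1 := by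
  have h : editDist (a :: u) u ≤ defaultCost.delete a + editDist u u :=
    levenshtein_cons_left_le defaultCost a u u
  simpa [defaultCost, editDist_self] using h

end EditDist

theorem sInf_extension_le_rowMin_add_one {α : Type*} [DecidableEq α]
    (p ystar : List α) (a : α) :
    sInf {d | ∃ s : List α, d = editDist (p ++ a :: s) ystar} ≤ rowMin p ystar + 1 := by
  obtain ⟨j, -, hj⟩ :=
    Finset.exists_mem_eq_inf' (by simp : (Finset.range (ystar.length + 1)).Nonempty)
      (fun j => editDist p (ystar.take j))
  have mem : editDist (p ++ a :: ystar.drop j) ystar ∈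
      {d | ∃ s : List α, d = editDist (p ++ a :: s) ystar} := ⟨_, rfl⟩
  refine (Nat.sInf_le mem).trans ?_
  calc editDist (p ++ a :: ystar.drop j) ystar
      = editDist (p ++ a :: ystar.drop j) (ystar.take j ++ ystar.drop j) := by
        rw [List.take_append_drop]
    _ ≤ editDist p (ystar.take j) + editDist (a :: ystar.drop j) (ystar.drop j) :=
        editDist_append_le _ _ _ _
    _ ≤ rowMin p ystar + 1 := by
        rw [rowMin, hj]
        gcongr
        exact editDist_cons_self_le_one a _
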